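/- Endpoint balayage formula (2.8): Let N ∈ ℕ₊ and let f : (0,∞) → H be continuously differentiable with compact support in (0,∞). Then the improper integral lim_{R→∞} ∫₀^R T(Nt)(M₊(f)(t)) dt exists in H and equals (1/(N+1)) ∫₀^∞ T(Ns) f(s) ds. In semigroup notation this is ∫₀^∞ e^{-NtA} M₊(f)(t) dt = (1/(N+1)) ∫₀^∞ e^{-NsA} f(s) ds. -/

import Mathlib

/-!
Write `T'` for the derivative of `T` and `c = N + 1`. Since `T(w) T'(u) = T'(w + u)`, applying
`T(Nt)` to the principal value removes its singularity:
`T(Nt) M₊f(t) = -∫₀ᵗ T'(ct - s) f(s) ds`, with `ct - s ≥ Nt > 0`. Exchanging the order of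
integration over the triangle `0 < s < t < R` and integrating `T'(ct - s)` in `t` gives
`∫₀ᴿ T(Nt) M₊f(t) dt = c⁻¹ (∫ T(Ns) f(s) ds - ∫ T(cR - s) f(s) ds)`,
and the last integral tends to `0` by dominated convergence, since `T` is bounded and
strongly decaying.
-/

open MeasureTheory Filter Topology Set

theorem IsCompact.exists_Icc_of_subset_Ioi {K : Set ℝ} {x : ℝ} (hK : IsCompact K)
    (hKx : K ⊆ Ioi x) : ∃ a b, x < a ∧ K ⊆ Icc a b := by
  obtain ⟨b, hb⟩ := hK.bddAbove
  rcases K.eq_empty_or_nonempty with rfl | hne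
  · exact ⟨x + 1, b, by linarith, empty_subset _⟩
  · exact ⟨sInf K, b, hKx (hK.sInf_mem hne), fun y hy => ⟨csInf_le hK.bddBelow hy, hb hy⟩⟩

theorem tendsto_setIntegral_Ioo_sub_nhdsGT {G : Type*} [NormedAddCommGroup G] [NormedSpace ℝ G]
    {f : ℝ → G} {a b : ℝ} (hab : a < b) (hf : IntegrableOn f (Icc a b)) :
    Tendsto (fun ε => ∫ s in Ioo a (b - ε), f s) (𝓝[>] 0) (𝓝 (∫ s in Ioo a b, f s)) := by
  have hprim : ContinuousWithinAt (fun x => ∫ s in a..x, f s) (Icc a b) b := by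
    have := intervalIntegral.continuousOn_primitive_interval (μ := volume)
      (by rwa [uIcc_of_le hab.le])
    rw [uIcc_of_le hab.le] at this
    exact this b (right_mem_Icc.2 hab.le)
  have hsub : Tendsto (fun ε => b - ε) (𝓝[>] 0) (𝓝[Icc a b] b) := by
    refine tendsto_nhdsWithin_iff.2 ⟨?_, ?_⟩
    · simpa using ((continuous_sub_left b).tendsto 0).mono_left nhdsWithin_le_nhds
    · filter_upwards [Ioo_mem_nhdsGT (sub_pos.2 hab)] with ε hε
      exact ⟨by linarith [hε.2], by linarith [hε.1]⟩
  have hIoo : ∀ x, a ≤ x → ∫ s in a..x, f s = ∫ s in Ioo a x, f s := fun x hx => by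
    rw [intervalIntegral.integral_of_le hx, integral_Ioc_eq_integral_Ioo]
  rw [← hIoo b hab.le]
  refine (hprim.tendsto.comp hsub).congr' ?_
  filter_upwards [Ioo_mem_nhdsGT (sub_pos.2 hab)] with ε hε
  exact hIoo _ (by linarith [hε.2])

theorem integral_Ioo_integral_Ioo_swap {G : Type*} [NormedAddCommGroup G] [NormedSpace ℝ G]
    {k : ℝ → ℝ → G} {a b : ℝ}
    (hk : IntegrableOn (Function.uncurry k) {p : ℝ × ℝ | a < p.2 ∧ p.2 < p.1 ∧ p.1 < b}) :
    ∫ t in Ioo a b, ∫ s in Ioo a t, k t s = ∫ s in Ioo a b, ∫ t in Ioo s b, k t s := by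
  set V : Set (ℝ × ℝ) := {p | p.2 < p.1}
  have hV : MeasurableSet V := measurableSet_lt measurable_snd measurable_fst
  set K : ℝ × ℝ → G := V.indicator (Function.uncurry k)
  have hK : Integrable (Function.uncurry fun t s => K (t, s))
      ((volume.restrict (Ioo a b)).prod (volume.restrict (Ioo a b))) := by
    rw [Measure.prod_restrict, ← Measure.volume_eq_prod]
    refine (integrableOn_indicator_iff hV).2 (hk.mono_set ?_)
    rintro ⟨t, s⟩ ⟨hst, ⟨-, htb⟩, has, -⟩
    exact ⟨has, hst, htb⟩
  have hinner : ∀ t ∈ Ioo a b, ∫ s in Ioo a t, k t s = ∫ s in Ioo a b, K (t, s) := by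
    intro t ht
    have : (fun s => K (t, s)) = (Iio t).indicator (k t) := by
      ext s; simp [K, V, Set.indicator_apply]
    rw [this, setIntegral_indicator measurableSet_Iio, Ioo_inter_Iio, min_eq_right ht.2.le]
  have houter : ∀ s ∈ Ioo a b, ∫ t in Ioo s b, k t s = ∫ t in Ioo a b, K (t, s) := by
    intro s hs
    have : (fun t => K (t, s)) = (Ioi s).indicator (fun t => k t s) := by
      ext t; simp [K, V, Set.indicator_apply]
    rw [this, setIntegral_indicator measurableSet_Ioi, Ioo_inter_Ioi, max_eq_right hs.1.le]
  rw [setIntegral_congr_fun measurableSet_Ioo hinner,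
    setIntegral_congr_fun measurableSet_Ioo houter]
  exact integral_integral_swap hK

section

variable {E F : Type*} [NormedAddCommGroup E] [NormedSpace ℂ E]
  [NormedAddCommGroup F] [NormedSpace ℂ F]

theorem comp_deriv_eq_deriv_add {T T' : ℝ → E →L[ℂ] E}
    (hTadd : ∀ s t : ℝ, 0 ≤ s → 0 ≤ t → T (s + t) = (T s).comp (T t))
    (hT' : ∀ t, 0 < t → HasDerivAt T (T' t) t) {w u : ℝ} (hw : 0 ≤ w) (hu : 0 < u) :
    (T w).comp (T' u) = T' (w + u) := by
  have hcomp : HasDerivAt (fun v => (T w).comp (T v)) ((T w).comp (T' u)) u :=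
    (((ContinuousLinearMap.compL ℂ E E E (T w)).restrictScalars ℝ).hasFDerivAt).comp_hasDerivAt
      u (hT' u hu)
  have hshift : HasDerivAt (fun v => T (w + v)) (T' (w + u)) u :=
    (hT' (w + u) (by linarith)).comp_const_add w u
  refine hcomp.unique (hshift.congr_of_eventuallyEq ?_)
  filter_upwards [eventually_gt_nhds hu] with v hv
  exact (hTadd w v hw hv.le).symm

theorem HasDerivAt.clm_apply_const {T : ℝ → E →L[ℂ] F} {T' : E →L[ℂ] F} {t : ℝ}
    (h : HasDerivAt T T' t) (x : E) : HasDerivAt (fun u => T u x) (T' x) t :=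
  ((ContinuousLinearMap.apply ℂ F x).restrictScalars ℝ).hasFDerivAt.comp_hasDerivAt t h

theorem integral_deriv_apply_comp_mul_sub [CompleteSpace F] {T T' : ℝ → E →L[ℂ] F}
    (hT' : ∀ t, 0 < t → HasDerivAt T (T' t) t) (hT'cont : ContinuousOn T' (Ioi 0))
    {a b c d : ℝ} (hab : a ≤ b) (hc : 0 < c) (hpos : 0 < c * a - d) (x : E) :
    ∫ t in Ioo a b, T' (c * t - d) x = c⁻¹ • (T (c * b - d) x - T (c * a - d) x) := by
  have hIcc : Icc (c * a - d) (c * b - d) ⊆ Ioi 0 := fun u hu => hpos.trans_le hu.1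
  have hle : c * a - d ≤ c * b - d := by gcongr
  rw [← integral_Ioc_eq_integral_Ioo, ← intervalIntegral.integral_of_le hab,
    intervalIntegral.integral_comp_mul_sub (fun u => T' u x) hc.ne',
    intervalIntegral.integral_eq_sub_of_hasDerivAt (f := fun u => T u x)]
  · rw [uIcc_of_le hle]
    exact fun u hu => (hT' u (hIcc hu)).clm_apply_const x
  · exact ((hT'cont.mono hIcc).clm_apply continuousOn_const).intervalIntegrable_of_Icc hle

theorem apply_principalValue_eq [CompleteSpace E] {T T' : ℝ → E →L[ℂ] E}
    (hTadd : ∀ s t : ℝ, 0 ≤ s → 0 ≤ t → T (s + t) = (T s).comp (T t))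
    (hT' : ∀ t, 0 < t → HasDerivAt T (T' t) t) (hT'cont : ContinuousOn T' (Ioi 0))
    {f : ℝ → E} (hf : Continuous f) {t w : ℝ} {y : E} (ht : 0 < t) (hw : 0 < w)
    (hy : Tendsto (fun ε => -∫ s in Ioo 0 (t - ε), T' (t - s) (f s)) (𝓝[>] 0) (𝓝 y)) :
    T w y = -∫ s in Ioo 0 t, T' (w + (t - s)) (f s) := by
  have hlim : Tendsto (fun ε => -∫ s in Ioo 0 (t - ε), T' (w + (t - s)) (f s)) (𝓝[>] 0)
      (𝓝 (-∫ s in Ioo 0 t, T' (w + (t - s)) (f s))) := by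
    refine (tendsto_setIntegral_Ioo_sub_nhdsGT ht ?_).neg
    refine ((hT'cont.comp (by fun_prop) fun s hs => ?_).clm_apply hf.continuousOn).integrableOn_Icc
    exact show 0 < w + (t - s) by linarith [hs.2]
  refine tendsto_nhds_unique (((T w).continuous.tendsto y).comp hy) (hlim.congr' ?_)
  filter_upwards [Ioo_mem_nhdsGT ht] with ε hε
  have hint : IntegrableOn (fun s => T' (t - s) (f s)) (Ioo 0 (t - ε)) := by
    refine (((hT'cont.comp (by fun_prop) fun s hs => ?_).clm_apply
      hf.continuousOn).integrableOn_Icc).mono_set Ioo_subset_Icc_self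
    exact show 0 < t - s by linarith [hs.2, hε.1]
  rw [Function.comp_apply, map_neg, ← ContinuousLinearMap.integral_comp_comm _ hint]
  refine congrArg Neg.neg (setIntegral_congr_fun measurableSet_Ioo fun s hs => ?_)
  rw [← comp_deriv_eq_deriv_add hTadd hT' hw.le (by linarith [hs.2, hε.1])]
  rfl

theorem setIntegral_apply_eq_setIntegral_Icc {A : ℝ → E →L[ℂ] F} {f : ℝ → E} {a b : ℝ}
    (hf : ∀ s ∉ Icc a b, f s = 0) {S : Set ℝ} (hS : MeasurableSet S) (habS : Icc a b ⊆ S) :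
    ∫ s in S, A s (f s) = ∫ s in Icc a b, A s (f s) :=
  setIntegral_eq_of_subset_of_forall_sdiff_eq_zero hS habS fun s hs => by rw [hf s hs.2, map_zero]

theorem tendsto_setIntegral_Icc_apply_sub_atTop {T : ℝ → E →L[ℂ] F}
    (hTcont : ContinuousOn T (Ioi 0)) {M : ℝ} (hM : ∀ t, 0 ≤ t → ‖T t‖ ≤ M)
    (hTinf : ∀ x, Tendsto (fun u => T u x) atTop (𝓝 0)) {f : ℝ → E} (hf : Continuous f)
    (a b : ℝ) {u : ℝ → ℝ} (hu : Tendsto u atTop atTop) :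
    Tendsto (fun R => ∫ s in Icc a b, T (u R - s) (f s)) atTop (𝓝 0) := by
  have key := tendsto_integral_filter_of_dominated_convergence (l := atTop)
    (μ := volume.restrict (Icc a b))
    (F := fun R s => T (u R - s) (f s)) (f := fun _ => 0) (fun s => M * ‖f s‖) ?_ ?_ ?_ ?_
  · simpa using key
  · filter_upwards [hu.eventually_gt_atTop b] with R hR
    refine ((hTcont.comp (by fun_prop) fun s hs => ?_).clm_apply
      hf.continuousOn).aestronglyMeasurable measurableSet_Icc
    exact show 0 < u R - s by linarith [hs.2]
  · filter_upwards [hu.eventually_ge_atTop b] with R hR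
    refine (ae_restrict_iff' measurableSet_Icc).2 (Eventually.of_forall fun s hs => ?_)
    exact (T _).le_of_opNorm_le (hM _ (by linarith [hs.2])) _
  · exact (continuous_const.mul hf.norm).integrableOn_Icc
  · refine Eventually.of_forall fun s => (hTinf (f s)).comp ?_
    simpa [sub_eq_add_neg] using tendsto_atTop_add_const_right _ (-s) hu

theorem integrableOn_triangle_deriv_apply_comp_mul_sub {T' : ℝ → E →L[ℂ] F}
    (hT'cont : ContinuousOn T' (Ioi 0)) {f : ℝ → E} (hf : Continuous f) {a c : ℝ} (ha : 0 < a)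
    (hfa : ∀ s < a, f s = 0) (hc : 1 < c) (R : ℝ) :
    IntegrableOn (Function.uncurry fun t s => T' (c * t - s) (f s))
      {p : ℝ × ℝ | 0 < p.2 ∧ p.2 < p.1 ∧ p.1 < R} := by
  set K := {p : ℝ × ℝ | a ≤ p.2 ∧ p.2 ≤ p.1 ∧ p.1 ≤ R}
  have hK : IsCompact K := by
    refine ((isCompact_Icc (a := a) (b := R)).prod
      (isCompact_Icc (a := a) (b := R))).of_isClosed_subset ?_ ?_
    · exact (isClosed_le continuous_const continuous_snd).inter
        ((isClosed_le continuous_snd continuous_fst).inter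
          (isClosed_le continuous_fst continuous_const))
    · rintro ⟨t, s⟩ ⟨has, hst, htR⟩
      exact ⟨⟨has.trans hst, htR⟩, has, hst.trans htR⟩
  refine (((hT'cont.comp (by fun_prop) fun p hp => ?_).clm_apply
    (hf.comp continuous_snd).continuousOn).integrableOn_compact hK).of_forall_sdiff_eq_zero
    ((measurableSet_lt measurable_const measurable_snd).inter
      ((measurableSet_lt measurable_snd measurable_fst).inter
        (measurableSet_lt measurable_fst measurable_const))) ?_
  · obtain ⟨has, hst, -⟩ := hp
    exact show 0 < c * p.1 - p.2 by nlinarith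
  · rintro ⟨t, s⟩ ⟨⟨-, hst, htR⟩, hnot⟩
    have hsa : s < a := not_le.1 fun h => hnot ⟨h, hst.le, htR.le⟩
    simp [hfa s hsa]

theorem integral_Ioo_apply_principalValue [CompleteSpace E] {T T' : ℝ → E →L[ℂ] E}
    (hTadd : ∀ s t : ℝ, 0 ≤ s → 0 ≤ t → T (s + t) = (T s).comp (T t))
    (hT' : ∀ t, 0 < t → HasDerivAt T (T' t) t) (hT'cont : ContinuousOn T' (Ioi 0))
    {f : ℝ → E} (hf : Continuous f) {a : ℝ} (ha : 0 < a) (hfa : ∀ s < a, f s = 0) {g : ℝ → E}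
    (hg : ∀ t, 0 < t →
      Tendsto (fun ε => -∫ s in Ioo 0 (t - ε), T' (t - s) (f s)) (𝓝[>] 0) (𝓝 (g t)))
    {N : ℝ} (hN : 0 < N) (R : ℝ) :
    ∫ t in Ioo 0 R, T (N * t) (g t) = (N + 1)⁻¹ • (∫ s in Ioo 0 R, T (N * s) (f s))
      - (N + 1)⁻¹ • ∫ s in Ioo 0 R, T ((N + 1) * R - s) (f s) := by
  set c := N + 1
  have hc : 0 < c := by positivity
  have hTcont : ContinuousOn T (Ioi 0) := fun t ht => (hT' t ht).continuousAt.continuousWithinAt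
  have hint : ∀ φ : ℝ → ℝ, Continuous φ → (∀ s ∈ Icc a R, 0 < φ s) →
      IntegrableOn (fun s => T (φ s) (f s)) (Ioo 0 R) := by
    intro φ hφ hpos
    refine ((hTcont.comp hφ.continuousOn hpos).clm_apply
      hf.continuousOn).integrableOn_Icc.of_forall_sdiff_eq_zero measurableSet_Ioo ?_
    rintro s ⟨hs, hsa⟩
    rw [hfa s (not_le.1 fun h => hsa ⟨h, hs.2.le⟩), map_zero]
  have htriangle := integrableOn_triangle_deriv_apply_comp_mul_sub hT'cont hf ha hfa
    (by linarith : 1 < c) R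
  calc ∫ t in Ioo 0 R, T (N * t) (g t)
      = ∫ t in Ioo 0 R, -∫ s in Ioo 0 t, T' (c * t - s) (f s) := by
        refine setIntegral_congr_fun measurableSet_Ioo fun t ht => ?_
        rw [apply_principalValue_eq hTadd hT' hT'cont hf ht.1 (mul_pos hN ht.1) (hg t ht.1)]
        simp only [c, add_one_mul, add_sub_assoc]
    _ = -∫ s in Ioo 0 R, ∫ t in Ioo s R, T' (c * t - s) (f s) := by
        rw [integral_neg, integral_Ioo_integral_Ioo_swap htriangle]
    _ = -∫ s in Ioo 0 R, c⁻¹ • (T (c * R - s) (f s) - T (N * s) (f s)) := by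
        refine congrArg Neg.neg (setIntegral_congr_fun measurableSet_Ioo fun s hs => ?_)
        rw [integral_deriv_apply_comp_mul_sub hT' hT'cont hs.2.le hc (by nlinarith [hs.1]),
          show c * s - s = N * s by ring]
    _ = c⁻¹ • (∫ s in Ioo 0 R, T (N * s) (f s)) - c⁻¹ • ∫ s in Ioo 0 R, T (c * R - s) (f s) := by
        have hfirst := hint (fun s => c * R - s) (by fun_prop) fun s hs => by
          nlinarith [hs.1, hs.2]
        have hsecond := hint (fun s => N * s) (by fun_prop) fun s hs => by nlinarith [hs.1]
        rw [integral_smul, integral_sub hfirst hsecond, smul_sub, neg_sub]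

end

theorem endpoint_balayage_formula_forward_general
    {H : Type*} [NormedAddCommGroup H] [InnerProductSpace ℂ H] [CompleteSpace H]
    (T : ℝ → H →L[ℂ] H) (Tk : ℕ → ℝ → H →L[ℂ] H)
    (hTadd : ∀ s t : ℝ, 0 ≤ s → 0 ≤ t → T (s + t) = (T s).comp (T t))
    (hTk0 : ∀ t : ℝ, 0 < t → Tk 0 t = T t)
    (hTkderiv : ∀ (k : ℕ) (t : ℝ), 0 < t → HasDerivAt (Tk k) (Tk (k + 1) t) t)
    (hM0 : ∃ M : ℝ, ∀ t : ℝ, 0 ≤ t → ‖T t‖ ≤ M)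
    -- decay of the semigroup at infinity
    (hTinf : ∀ x : H, Tendsto (fun u : ℝ => T u x) atTop (𝓝 0))
    (N : ℕ) (hN : 1 ≤ N)
    (f : ℝ → H) (hf : ContDiff ℝ 1 f) (hfc : HasCompactSupport f)
    (hfs : tsupport f ⊆ Ioi (0 : ℝ))
    -- `g = M₊(f)`, realized as the principal value limit
    (g : ℝ → H)
    (hg : ∀ t : ℝ, 0 < t →
      Tendsto (fun ε : ℝ => -∫ s in Ioo (0 : ℝ) (t - ε), (Tk 1 (t - s)) (f s))
        (𝓝[>] (0 : ℝ)) (𝓝 (g t))) :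
    IntegrableOn (fun s : ℝ => (T ((N : ℝ) * s)) (f s)) (Ioi 0) ∧
    Tendsto (fun R : ℝ => ∫ t in Ioo (0 : ℝ) R, (T ((N : ℝ) * t)) (g t)) atTop
      (𝓝 ((1 / (N + 1 : ℝ)) • ∫ s in Ioi (0 : ℝ), (T ((N : ℝ) * s)) (f s))) := by
  obtain ⟨M, hM⟩ := hM0
  have hT' : ∀ t, 0 < t → HasDerivAt T (Tk 1 t) t := fun t ht =>
    (hTkderiv 0 t ht).congr_of_eventuallyEq <| by
      filter_upwards [eventually_gt_nhds ht] with u hu using (hTk0 u hu).symm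
  have hT'cont : ContinuousOn (Tk 1) (Ioi 0) := fun t ht =>
    (hTkderiv 1 t ht).continuousAt.continuousWithinAt
  have hTcont : ContinuousOn T (Ioi 0) := fun t ht => (hT' t ht).continuousAt.continuousWithinAt
  have hNpos : (0 : ℝ) < N := by exact_mod_cast hN
  obtain ⟨a, b, ha, hsupp⟩ := hfc.exists_Icc_of_subset_Ioi hfs
  have hf0 : ∀ s ∉ Icc a b, f s = 0 := fun s hs =>
    image_eq_zero_of_notMem_tsupport fun h => hs (hsupp h)
  have hint : IntegrableOn (fun s => T (N * s) (f s)) (Icc a b) :=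
    ((hTcont.comp (by fun_prop) fun s hs => mul_pos hNpos (ha.trans_le hs.1)).clm_apply
      hf.continuous.continuousOn).integrableOn_Icc
  refine ⟨hint.of_forall_sdiff_eq_zero measurableSet_Ioi fun s hs => by
    rw [hf0 s hs.2, map_zero], ?_⟩
  have herr := tendsto_setIntegral_Icc_apply_sub_atTop hTcont hM hTinf hf.continuous a b
    (u := fun R => (N + 1) * R) (tendsto_id.const_mul_atTop (by positivity))
  have hlim := (tendsto_const_nhds (x := ((N : ℝ) + 1)⁻¹ • ∫ s in Ioi 0, T (N * s) (f s))).sub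
    (herr.const_smul ((N : ℝ) + 1)⁻¹)
  rw [smul_zero, sub_zero] at hlim
  rw [one_div]
  refine hlim.congr' ?_
  filter_upwards [eventually_gt_atTop b] with R hR
  have hIcc : Icc a b ⊆ Ioo 0 R := fun s hs => ⟨ha.trans_le hs.1, hs.2.trans_lt hR⟩
  rw [integral_Ioo_apply_principalValue hTadd hT' hT'cont hf.continuous ha
      (fun s hs => hf0 s fun h => (hs.trans_le h.1).false) hg hNpos R,
    setIntegral_apply_eq_setIntegral_Icc hf0 measurableSet_Ioi (hIcc.trans Ioo_subset_Ioi_self),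
    setIntegral_apply_eq_setIntegral_Icc hf0 measurableSet_Ioo hIcc,
    setIntegral_apply_eq_setIntegral_Icc hf0 measurableSet_Ioo hIcc]

/-- Endpoint balayage formula (2.8): for `N ∈ ℕ₊` and `f` continuously differentiable
with compact support in `(0,∞)`, with `g = M₊(f)` the (principal-value) forward maximal
regularity operator applied to `f`, the function `s ↦ T(Ns) f(s)` is Bochner integrable
on `(0,∞)` and the improper integral `lim_{R→∞} ∫₀^R T(Nt)(M₊(f)(t)) dt` exists in `H`
and equals `(1/(N+1)) • ∫₀^∞ T(Ns) f(s) ds`. -/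
theorem endpoint_balayage_formula_forward
    {H : Type*} [NormedAddCommGroup H] [InnerProductSpace ℂ H] [CompleteSpace H]
    (T : ℝ → H →L[ℂ] H) (Tk : ℕ → ℝ → H →L[ℂ] H)
    (hT0 : T 0 = ContinuousLinearMap.id ℂ H)
    (hTadd : ∀ s t : ℝ, 0 ≤ s → 0 ≤ t → T (s + t) = (T s).comp (T t))
    (hTcont : ∀ x : H, ContinuousOn (fun t : ℝ => T t x) (Ici (0 : ℝ)))
    (hTk0 : ∀ t : ℝ, 0 < t → Tk 0 t = T t)
    (hTkderiv : ∀ (k : ℕ) (t : ℝ), 0 < t → HasDerivAt (Tk k) (Tk (k + 1) t) t)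
    (hMk : ∀ k : ℕ, 1 ≤ k → ∃ M : ℝ, ∀ t : ℝ, 0 < t → t ^ k * ‖Tk k t‖ ≤ M)
    (hM0 : ∃ M : ℝ, ∀ t : ℝ, 0 ≤ t → ‖T t‖ ≤ M)
    -- decay of the semigroup at infinity
    (hTinf : ∀ x : H, Tendsto (fun u : ℝ => T u x) atTop (𝓝 0))
    (N : ℕ) (hN : 1 ≤ N)
    (f : ℝ → H) (hf : ContDiff ℝ 1 f) (hfc : HasCompactSupport f)
    (hfs : tsupport f ⊆ Ioi (0 : ℝ))
    -- `g = M₊(f)`, realized as the principal value limit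
    (g : ℝ → H)
    (hg : ∀ t : ℝ, 0 < t →
      Tendsto (fun ε : ℝ => -∫ s in Ioo (0 : ℝ) (t - ε), (Tk 1 (t - s)) (f s))
        (𝓝[>] (0 : ℝ)) (𝓝 (g t))) :
    IntegrableOn (fun s : ℝ => (T ((N : ℝ) * s)) (f s)) (Ioi 0) ∧
    Tendsto (fun R : ℝ => ∫ t in Ioo (0 : ℝ) R, (T ((N : ℝ) * t)) (g t)) atTop
      (𝓝 ((1 / (N + 1 : ℝ)) • ∫ s in Ioi (0 : ℝ), (T ((N : ℝ) * s)) (f s))) :=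
  endpoint_balayage_formula_forward_general T Tk hTadd hTk0 hTkderiv hM0 hTinf N hN f hf hfc hfs g
    hg
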